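/- arXiv:1507.05087 — 3 statements merged into one kernel-verified Lean document; each statement's English description precedes it below -/
import Mathlib

section
/- For every a > 0 and every real x, the Gaussian scale mixture with exponential mixing density equals the Laplacian density: ∫₀^∞ (2πγ)^(−1/2) · exp(−x²/(2γ)) · (a²/2) · exp(−a²γ/2) dγ = (a/2) · exp(−a·|x|). -/
/-!
After the substitution `γ = t²` the mixture integral becomes `exp (-a |x|)` times a multiple of
`∫₀^∞ exp (-(b t - c / t)²) dt` with `b = a / √2`, `c = |x| / √2`. For an even integrable `f`,
the Cauchy–Schlömilch substitution `s = b t - c / t` maps `(0, ∞)` increasingly onto `ℝ` with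
`ds = (b + c / t²) dt`, and the involution `t ↦ c / (b t)` turns `∫ f (b t - c / t) c / t² dt`
into `b ∫ f (b t - c / t) dt`; hence `∫₀^∞ f (b t - c / t) dt = (2 b)⁻¹ ∫ f`, and for the Gaussian
`f s = exp (-s²)` this is `√π / (2 b)`.
-/

open MeasureTheory Real Set

section CauchySchlomilch

variable {b c : ℝ}

lemma hasDerivAt_mul_sub_div (b c : ℝ) {t : ℝ} (ht : t ≠ 0) :
    HasDerivAt (fun t => b * t - c / t) (b + c / t ^ 2) t := by
  have h := ((hasDerivAt_id t).const_mul b).fun_sub ((hasDerivAt_inv ht).const_mul c)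
  simpa [div_eq_mul_inv] using h

lemma monotoneOn_mul_sub_div (hb : 0 ≤ b) (hc : 0 ≤ c) :
    MonotoneOn (fun t => b * t - c / t) (Ioi 0) := fun _ ht _ _ htu =>
  sub_le_sub (mul_le_mul_of_nonneg_left htu hb) (div_le_div_of_nonneg_left hc ht htu)

lemma image_mul_sub_div_Ioi (hb : 0 < b) (hc : 0 < c) :
    (fun t => b * t - c / t) '' Ioi 0 = univ := by
  refine eq_univ_of_forall fun s => ?_
  set d := √(s ^ 2 + 4 * b * c)
  have hd : d ^ 2 = s ^ 2 + 4 * b * c := sq_sqrt (by positivity)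
  have hsd : 0 < s + d := by nlinarith [sqrt_nonneg (s ^ 2 + 4 * b * c)]
  refine ⟨(s + d) / (2 * b), div_pos hsd (by positivity), ?_⟩
  field_simp
  nlinarith

lemma integral_Ioi_div_sq_mul_comp_div {κ : ℝ} (hκ : 0 < κ) (g : ℝ → ℝ) :
    ∫ t in Ioi 0, κ / t ^ 2 * g (κ / t) = ∫ t in Ioi 0, g t := by
  have himage : (fun t => κ / t) '' Ioi 0 = Ioi 0 := by
    refine Subset.antisymm (image_subset_iff.2 fun t ht => div_pos hκ ht) fun s hs => ?_
    exact ⟨κ / s, div_pos hκ hs, div_div_cancel₀ hκ.ne'⟩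
  have hderiv : ∀ t ∈ Ioi (0 : ℝ), HasDerivWithinAt (fun t => κ / t) (-(κ / t ^ 2)) (Ioi 0) t :=
    fun t ht => by
      simpa [neg_div] using (hasDerivAt_mul_sub_div 0 (-κ) (ne_of_gt ht)).hasDerivWithinAt
  have hanti : AntitoneOn (fun t => κ / t) (Ioi 0) := fun t ht _ _ htu =>
    div_le_div_of_nonneg_left hκ.le ht htu
  simpa [himage] using
    (integral_image_eq_integral_deriv_smul_of_antitoneOn measurableSet_Ioi hderiv hanti g).symm

lemma integral_eq_integral_Ioi_mul_comp_mul_sub_div (hb : 0 < b) (hc : 0 < c) (f : ℝ → ℝ) :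
    ∫ s, f s = ∫ t in Ioi 0, (b + c / t ^ 2) * f (b * t - c / t) := by
  simpa [image_mul_sub_div_Ioi hb hc] using
    integral_image_eq_integral_deriv_smul_of_monotoneOn measurableSet_Ioi
      (fun t ht => (hasDerivAt_mul_sub_div b c (ne_of_gt ht)).hasDerivWithinAt)
      (monotoneOn_mul_sub_div hb.le hc.le) f

lemma integrable_iff_integrableOn_Ioi_mul_comp_mul_sub_div (hb : 0 < b) (hc : 0 < c)
    (f : ℝ → ℝ) :
    Integrable f ↔ IntegrableOn (fun t => (b + c / t ^ 2) * f (b * t - c / t)) (Ioi 0) := by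
  simpa [image_mul_sub_div_Ioi hb hc] using
    integrableOn_image_iff_integrableOn_deriv_smul_of_monotoneOn measurableSet_Ioi
      (fun t ht => (hasDerivAt_mul_sub_div b c (ne_of_gt ht)).hasDerivWithinAt)
      (monotoneOn_mul_sub_div hb.le hc.le) f

lemma MeasureTheory.Integrable.integrableOn_Ioi_comp_mul_sub_div (hb : 0 < b) (hc : 0 < c)
    {f : ℝ → ℝ} (hf : Integrable f) : IntegrableOn (fun t => f (b * t - c / t)) (Ioi 0) := by
  have hbound : ∀ t : ℝ, ‖(b + c / t ^ 2)⁻¹‖ ≤ b⁻¹ := fun t => by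
    have : 0 ≤ c / t ^ 2 := by positivity
    rw [norm_inv, Real.norm_of_nonneg (by positivity)]
    exact inv_anti₀ hb (by linarith)
  have h := ((integrable_iff_integrableOn_Ioi_mul_comp_mul_sub_div hb hc f).1 hf).bdd_mul
    (Measurable.aestronglyMeasurable (by fun_prop)) (Filter.Eventually.of_forall hbound)
  refine IntegrableOn.congr_fun h (fun t ht => ?_) measurableSet_Ioi
  have : 0 < b + c / t ^ 2 := by have := mem_Ioi.1 ht; positivity
  simp only [inv_mul_cancel_left₀ this.ne']

theorem integral_Ioi_comp_mul_sub_div_of_even (hb : 0 < b) (hc : 0 ≤ c) {f : ℝ → ℝ}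
    (hf : Integrable f) (heven : ∀ s, f (-s) = f s) :
    ∫ t in Ioi 0, f (b * t - c / t) = (2 * b)⁻¹ * ∫ s, f s := by
  rcases hc.eq_or_lt with rfl | hc
  · have habs : ∫ s, f s = ∫ s, f |s| := integral_congr_ae <| Filter.Eventually.of_forall
      fun s => by rcases abs_choice s with h | h <;> simp [h, heven]
    simp only [zero_div, sub_zero]
    rw [integral_comp_mul_left_Ioi f 0 hb, mul_zero, habs, integral_comp_abs, smul_eq_mul]
    field_simp
  set J := ∫ t in Ioi 0, f (b * t - c / t)
  have hJ := hf.integrableOn_Ioi_comp_mul_sub_div hb hc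
  have hsub : ∫ t in Ioi 0, c / t ^ 2 * f (b * t - c / t) = (∫ s, f s) - b * J := by
    rw [integral_eq_integral_Ioi_mul_comp_mul_sub_div hb hc, ← integral_const_mul,
      ← integral_sub ((integrable_iff_integrableOn_Ioi_mul_comp_mul_sub_div hb hc f).1 hf)
        (hJ.const_mul b)]
    congr 1; ext t; ring
  have hsymm : ∫ t in Ioi 0, c / t ^ 2 * f (b * t - c / t) = b * J := by
    -- `t ↦ (c / b) / t` maps `b t - c / t` to its negative
    rw [← integral_const_mul, ← integral_Ioi_div_sq_mul_comp_div (div_pos hc hb)]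
    refine setIntegral_congr_fun measurableSet_Ioi fun t ht => ?_
    have ht : t ≠ 0 := ne_of_gt ht
    have harg : b * (c / b / t) - c / (c / b / t) = -(b * t - c / t) := by field_simp; ring
    rw [harg, heven]
    field_simp
  field_simp
  linarith

end CauchySchlomilch

theorem integral_Ioi_rpow_neg_half_mul_exp_neg_mul_sub_div {p q : ℝ} (hp : 0 ≤ p) (hq : 0 < q) :
    ∫ γ in Ioi 0, γ ^ (-(1/2) : ℝ) * exp (-q * γ - p / γ) = √(π / q) * exp (-2 * √(p * q)) := by
  have hcs : ∫ t in Ioi 0, exp (-(√q * t - √p / t) ^ 2) = (2 * √q)⁻¹ * √π := by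
    have hgauss : ∫ s, exp (-s ^ 2) = √π := by simpa using integral_gaussian 1
    rw [← hgauss]
    exact integral_Ioi_comp_mul_sub_div_of_even (sqrt_pos.2 hq) (sqrt_nonneg p)
      (by simpa using integrable_exp_neg_mul_sq one_pos) fun s => by rw [neg_sq]
  rw [← integral_comp_rpow_Ioi_of_pos two_pos]
  have hpt : ∀ t ∈ Ioi (0 : ℝ), (2 * t ^ ((2 : ℝ) - 1)) •
      ((t ^ (2 : ℝ)) ^ (-(1/2) : ℝ) * exp (-q * t ^ (2 : ℝ) - p / t ^ (2 : ℝ))) =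
      2 * exp (-2 * √(p * q)) * exp (-(√q * t - √p / t) ^ 2) := fun t ht => by
    have ht : 0 < t := ht
    have hinv : (t ^ (2 : ℝ)) ^ (-(1/2) : ℝ) = t⁻¹ := by
      rw [← rpow_mul ht.le]; norm_num [rpow_neg_one]
    have hexp : -q * t ^ 2 - p / t ^ 2 = -2 * √(p * q) + -(√q * t - √p / t) ^ 2 := by
      rw [sqrt_mul hp]
      field_simp
      linear_combination t ^ 4 * sq_sqrt hq.le + sq_sqrt hp
    rw [show (2 : ℝ) - 1 = 1 by norm_num, rpow_one, hinv, rpow_two, smul_eq_mul, hexp, exp_add]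
    field_simp
  rw [setIntegral_congr_fun measurableSet_Ioi hpt, integral_const_mul, hcs, sqrt_div' _ hq.le]
  field_simp

/-- Gaussian scale mixture with exponential mixing density equals the Laplacian density. -/
theorem gaussian_scale_mixture_exponential_eq_laplacian (a : ℝ) (ha : 0 < a) (x : ℝ) :
    ∫ γ in Set.Ioi (0 : ℝ),
      (2 * π * γ) ^ (-(1/2) : ℝ) * Real.exp (-x ^ 2 / (2 * γ)) *
        (a ^ 2 / 2) * Real.exp (-(a ^ 2) * γ / 2)
      = (a / 2) * Real.exp (-a * |x|) := by
  have hpt : ∀ γ ∈ Ioi (0 : ℝ), (2 * π * γ) ^ (-(1/2) : ℝ) * exp (-x ^ 2 / (2 * γ)) *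
      (a ^ 2 / 2) * exp (-(a ^ 2) * γ / 2) =
      (2 * π) ^ (-(1/2) : ℝ) * (a ^ 2 / 2) *
        (γ ^ (-(1/2) : ℝ) * exp (-(a ^ 2 / 2) * γ - x ^ 2 / 2 / γ)) := fun γ hγ => by
    rw [mul_rpow (by positivity) (le_of_lt hγ), sub_eq_add_neg, exp_add]
    ring_nf
  rw [setIntegral_congr_fun measurableSet_Ioi hpt, integral_const_mul,
    integral_Ioi_rpow_neg_half_mul_exp_neg_mul_sub_div (by positivity) (by positivity)]
  have hroot : √(x ^ 2 / 2 * (a ^ 2 / 2)) = a * |x| / 2 := by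
    rw [show x ^ 2 / 2 * (a ^ 2 / 2) = (a * |x| / 2) ^ 2 by rw [← sq_abs x]; ring]
    exact sqrt_sq (by positivity)
  have hnorm : (2 * π) ^ (-(1/2) : ℝ) * √(π / (a ^ 2 / 2)) = a⁻¹ := by
    rw [show π / (a ^ 2 / 2) = 2 * π / a ^ 2 by field_simp, sqrt_div' _ (sq_nonneg a),
      sqrt_sq ha.le, rpow_neg (by positivity), ← sqrt_eq_rpow]
    field_simp
  rw [hroot, show -2 * (a * |x| / 2) = -a * |x| by ring]
  calc _ = (2 * π) ^ (-(1/2) : ℝ) * √(π / (a ^ 2 / 2)) * (a ^ 2 / 2) * exp (-a * |x|) := by ring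
    _ = a / 2 * exp (-a * |x|) := by rw [hnorm]; field_simp
end

section
/- For every ε > 0 and every real x, mixing a Laplacian density over its scale with an inverse gamma mixing density yields a generalized double Pareto (GT(1,1,ε)) density: ∫₀^∞ (1/(2γ)) · exp(−|x|/γ) · (ε^ε/Γ(ε)) · γ^(−ε−1) · exp(−ε/γ) dγ = (1/2) · (1 + |x|/ε)^(−(ε+1)). -/
/-!
Multiplying the two densities merges the exponentials, so the integrand is a constant times
`γ ^ (-(ε + 1) - 1) * exp (-(|x| + ε) / γ)`, an unnormalised inverse gamma density of
shape `ε + 1` and scale `|x| + ε`. Its integral is `Γ(ε + 1) / (|x| + ε) ^ (ε + 1)`,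
and `Γ(ε + 1) = ε Γ(ε)` turns the product into `(1/2) (ε / (|x| + ε)) ^ (ε + 1)`.
-/

open MeasureTheory Real Set

theorem integral_rpow_neg_sub_one_mul_exp_neg_div_Ioi {s a : ℝ} (hs : 0 < s) (ha : 0 < a) :
    ∫ γ in Ioi 0, γ ^ (-s - 1) * exp (-a / γ) = Gamma s / a ^ s := by
  -- substitute `γ = t⁻¹` in Euler's integral for `Γ(s)`
  calc ∫ γ in Ioi 0, γ ^ (-s - 1) * exp (-a / γ)
      = ∫ γ in Ioi 0, (|(-1 : ℝ)| * γ ^ ((-1 : ℝ) - 1)) •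
          ((γ ^ (-1 : ℝ)) ^ (s - 1) * exp (-(a * γ ^ (-1 : ℝ)))) := by
        refine setIntegral_congr_fun measurableSet_Ioi fun γ (hγ : 0 < γ) ↦ ?_
        rw [rpow_neg_one, inv_rpow hγ.le, ← rpow_neg hγ.le, smul_eq_mul, abs_neg, abs_one,
          one_mul, ← mul_assoc, ← rpow_add hγ, ← div_eq_mul_inv, neg_div]
        ring_nf
    _ = ∫ t in Ioi 0, t ^ (s - 1) * exp (-(a * t)) :=
        integral_comp_rpow_Ioi (fun t ↦ t ^ (s - 1) * exp (-(a * t))) (by norm_num)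
    _ = Gamma s / a ^ s := by
        rw [integral_rpow_mul_exp_neg_mul_Ioi hs ha, one_div, inv_rpow ha.le, inv_mul_eq_div]

theorem laplace_mul_invGamma_eq_rpow_mul_exp {ε γ : ℝ} (x : ℝ) (hγ : 0 < γ) :
    (1 / (2 * γ)) * exp (-|x| / γ) * ((ε ^ ε / Gamma ε) * γ ^ (-ε - 1) * exp (-ε / γ)) =
      ε ^ ε / (2 * Gamma ε) * (γ ^ (-(ε + 1) - 1) * exp (-(|x| + ε) / γ)) := by
  have hpow : γ ^ (-(ε + 1) - 1) = γ⁻¹ * γ ^ (-ε - 1) := by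
    rw [← rpow_neg_one, ← rpow_add hγ]; ring_nf
  rw [hpow, neg_add, add_div, exp_add]
  field_simp

/-- A Laplacian scale mixture with inverse gamma mixing density yields the
generalized double Pareto (GT(1,1,ε)) density. -/
theorem laplacian_scale_mixture_invGamma_eq_GDP (ε : ℝ) (hε : 0 < ε) (x : ℝ) :
    ∫ γ in Set.Ioi (0 : ℝ),
      (1 / (2 * γ)) * Real.exp (-|x| / γ) *
        ((ε ^ ε / Real.Gamma ε) * γ ^ (-ε - 1) * Real.exp (-ε / γ))
      = (1 / 2) * (1 + |x| / ε) ^ (-(ε + 1)) := by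
  have ha : 0 < |x| + ε := by positivity
  rw [setIntegral_congr_fun measurableSet_Ioi
      fun γ hγ ↦ laplace_mul_invGamma_eq_rpow_mul_exp x hγ, integral_const_mul,
    integral_rpow_neg_sub_one_mul_exp_neg_div_Ioi (by positivity) ha,
    Gamma_add_one hε.ne', show 1 + |x| / ε = (|x| + ε) / ε by field_simp; ring,
    rpow_neg (by positivity), div_rpow ha.le hε.le, rpow_add_one hε.ne']
  field_simp
end

section
/- For every p > 0, q > 0, and σ > 0, the normalization integral of the generalized t density is finite and given by ∫_ℝ (1 + |x|^p/(q·σ^p))^(−(q + 1/p)) dx = (2·σ·q^(1/p)/p) · B(1/p, q), where B denotes the Beta function. -/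
open MeasureTheory Real

/-- B(a,b) = Γ(a)Γ(b)/Γ(a+b), the Beta function. -/
noncomputable def Beta (a b : ℝ) : ℝ := Real.Gamma a * Real.Gamma b / Real.Gamma (a + b)

/-!
The substitution `x = σ q^(1/p) u` and the symmetry of the integrand reduce the integral to
`2 σ q^(1/p) ∫₀^∞ (1 + u^p)^(-(q + 1/p)) du`. Then `u = v^(1/p)` turns this into
`(1/p) ∫₀^∞ v^(1/p - 1) (1 + v)^(-(1/p + q)) dv`, a Beta integral of the second kind, and
`t = v / (1 + v)` turns that into `∫₀¹ t^(1/p - 1) (1 - t)^(q - 1) dt = B(1/p, q)`.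
-/

open Set

lemma ofReal_rpow_mul_one_sub_rpow {a b t : ℝ} (ht₀ : 0 ≤ t) (ht₁ : t ≤ 1) :
    ((t ^ (a - 1) * (1 - t) ^ (b - 1) : ℝ) : ℂ) =
      (t : ℂ) ^ ((a : ℂ) - 1) * (1 - (t : ℂ)) ^ ((b : ℂ) - 1) := by
  push_cast [Complex.ofReal_cpow ht₀, Complex.ofReal_cpow (sub_nonneg.2 ht₁)]
  rfl

lemma integrableOn_rpow_mul_one_sub_rpow {a b : ℝ} (ha : 0 < a) (hb : 0 < b) :
    IntegrableOn (fun t : ℝ => t ^ (a - 1) * (1 - t) ^ (b - 1)) (Ioo 0 1) := by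
  have h := Complex.betaIntegral_convergent (u := a) (v := b) (by simpa) (by simpa)
  rw [intervalIntegrable_iff_integrableOn_Ioo_of_le zero_le_one] at h
  refine IntegrableOn.congr_fun h.re (fun t ht => ?_) measurableSet_Ioo
  simp [← ofReal_rpow_mul_one_sub_rpow ht.1.le ht.2.le]

lemma integral_rpow_mul_one_sub_rpow {a b : ℝ} (ha : 0 < a) (hb : 0 < b) :
    ∫ t in Ioo (0 : ℝ) 1, t ^ (a - 1) * (1 - t) ^ (b - 1) = Beta a b := by
  have h : Complex.betaIntegral a b =
      ((∫ t in (0 : ℝ)..1, t ^ (a - 1) * (1 - t) ^ (b - 1) : ℝ) : ℂ) := by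
    rw [Complex.betaIntegral, ← intervalIntegral.integral_ofReal]
    refine intervalIntegral.integral_congr fun t ht => ?_
    rw [uIcc_of_le zero_le_one] at ht
    exact (ofReal_rpow_mul_one_sub_rpow ht.1 ht.2).symm
  rw [Beta, ← ProbabilityTheory.beta, ProbabilityTheory.beta_eq_betaIntegralReal a b ha hb, h,
    Complex.ofReal_re, intervalIntegral.integral_of_le zero_le_one, integral_Ioc_eq_integral_Ioo]

lemma image_div_one_add_Ioi : (fun v : ℝ => v / (1 + v)) '' Ioi 0 = Ioo 0 1 := by
  ext t
  constructor
  · rintro ⟨v, hv, rfl⟩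
    have hv : (0 : ℝ) < v := hv
    exact ⟨by positivity, (div_lt_one (by positivity)).2 (by linarith)⟩
  · rintro ⟨ht₀, ht₁⟩
    refine ⟨t / (1 - t), div_pos ht₀ (sub_pos.2 ht₁), ?_⟩
    field_simp [(sub_pos.2 ht₁).ne']
    ring

lemma injOn_div_one_add : InjOn (fun v : ℝ => v / (1 + v)) (Ioi 0) := by
  intro v hv w hw h
  have hv : (0 : ℝ) < v := hv
  have hw : (0 : ℝ) < w := hw
  field_simp at h
  linarith

lemma hasDerivAt_div_one_add {v : ℝ} (hv : 1 + v ≠ 0) :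
    HasDerivAt (fun v : ℝ => v / (1 + v)) ((1 + v) ^ 2)⁻¹ v := by
  refine ((hasDerivAt_id' v).div ((hasDerivAt_id' v).const_add 1) hv).congr_deriv ?_
  field_simp
  ring

section DivOneAdd

variable {E : Type*} [NormedAddCommGroup E] [NormedSpace ℝ E]

lemma integral_comp_div_one_add_Ioi (g : ℝ → E) :
    ∫ v in Ioi 0, ((1 + v) ^ 2)⁻¹ • g (v / (1 + v)) = ∫ t in Ioo 0 1, g t := by
  rw [← image_div_one_add_Ioi, integral_image_eq_integral_abs_deriv_smul measurableSet_Ioi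
    (fun v hv => (hasDerivAt_div_one_add (by linarith [mem_Ioi.1 hv])).hasDerivWithinAt)
    injOn_div_one_add]
  refine setIntegral_congr_fun measurableSet_Ioi (fun v _ => ?_)
  rw [abs_of_nonneg (by positivity)]

lemma integrableOn_Ioi_comp_div_one_add_iff (g : ℝ → E) :
    IntegrableOn (fun v => ((1 + v) ^ 2)⁻¹ • g (v / (1 + v))) (Ioi 0) ↔
      IntegrableOn g (Ioo 0 1) := by
  rw [← image_div_one_add_Ioi, integrableOn_image_iff_integrableOn_abs_deriv_smul
    measurableSet_Ioi
    (fun v hv => (hasDerivAt_div_one_add (by linarith [mem_Ioi.1 hv])).hasDerivWithinAt)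
    injOn_div_one_add]
  refine integrableOn_congr_fun (fun v _ => ?_) measurableSet_Ioi
  rw [abs_of_nonneg (by positivity)]

end DivOneAdd

lemma inv_sq_smul_rpow_mul_one_sub_rpow_div_one_add {a b v : ℝ} (hv : 0 < v) :
    ((1 + v) ^ 2)⁻¹ • ((v / (1 + v)) ^ (a - 1) * (1 - v / (1 + v)) ^ (b - 1)) =
      v ^ (a - 1) * (1 + v) ^ (-(a + b)) := by
  have h1v : 0 < 1 + v := by linarith
  have hsplit : (1 + v) ^ (a + b) = (1 + v) ^ (a - 1) * (1 + v) ^ (b - 1) * (1 + v) ^ 2 := by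
    rw [← rpow_natCast, ← rpow_add h1v, ← rpow_add h1v]
    norm_num
    ring_nf
  rw [show 1 - v / (1 + v) = (1 + v)⁻¹ by field_simp; ring, div_rpow hv.le h1v.le,
    inv_rpow h1v.le, rpow_neg h1v.le, hsplit, smul_eq_mul]
  field_simp

lemma integrableOn_rpow_mul_one_add_rpow_neg {a b : ℝ} (ha : 0 < a) (hb : 0 < b) :
    IntegrableOn (fun v : ℝ => v ^ (a - 1) * (1 + v) ^ (-(a + b))) (Ioi 0) := by
  refine ((integrableOn_Ioi_comp_div_one_add_iff _).2
    (integrableOn_rpow_mul_one_sub_rpow ha hb)).congr_fun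
    (fun v hv => inv_sq_smul_rpow_mul_one_sub_rpow_div_one_add hv) measurableSet_Ioi

lemma integral_rpow_mul_one_add_rpow_neg {a b : ℝ} (ha : 0 < a) (hb : 0 < b) :
    ∫ v in Ioi (0 : ℝ), v ^ (a - 1) * (1 + v) ^ (-(a + b)) = Beta a b := by
  rw [← integral_rpow_mul_one_sub_rpow ha hb, ← integral_comp_div_one_add_Ioi]
  exact setIntegral_congr_fun measurableSet_Ioi
    (fun v hv => (inv_sq_smul_rpow_mul_one_sub_rpow_div_one_add hv).symm)

lemma integrableOn_one_add_rpow_rpow_neg {p q : ℝ} (hp : 0 < p) (hq : 0 < q) :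
    IntegrableOn (fun u : ℝ => (1 + u ^ p) ^ (-(q + 1 / p))) (Ioi 0) := by
  rw [← integrableOn_Ioi_comp_rpow_iff' _ (one_div_pos.2 hp).ne']
  refine (integrableOn_rpow_mul_one_add_rpow_neg (one_div_pos.2 hp) hq).congr_fun
    (fun x hx => ?_) measurableSet_Ioi
  rw [smul_eq_mul, one_div, rpow_inv_rpow (le_of_lt hx) hp.ne', add_comm q]

lemma integral_one_add_rpow_rpow_neg {p q : ℝ} (hp : 0 < p) (hq : 0 < q) :
    ∫ u in Ioi (0 : ℝ), (1 + u ^ p) ^ (-(q + 1 / p)) = Beta (1 / p) q / p := by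
  rw [← integral_comp_rpow_Ioi_of_pos (one_div_pos.2 hp), div_eq_inv_mul (Beta _ _),
    ← integral_rpow_mul_one_add_rpow_neg (one_div_pos.2 hp) hq, ← integral_const_mul]
  refine setIntegral_congr_fun measurableSet_Ioi (fun x hx => ?_)
  rw [smul_eq_mul, one_div, rpow_inv_rpow (le_of_lt hx) hp.ne', add_comm q]
  ring

lemma MeasureTheory.IntegrableOn.comp_abs {E : Type*} [NormedAddCommGroup E] {f : ℝ → E}
    (hf : IntegrableOn f (Ioi 0)) : Integrable (fun x => f |x|) := by
  have hIoi : IntegrableOn (fun x => f |x|) (Ioi 0) :=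
    hf.congr_fun (fun x hx => by rw [abs_of_pos (mem_Ioi.1 hx)]) measurableSet_Ioi
  have hIic : IntegrableOn (fun x => f |x|) (Iic 0) := by
    have hneg : MeasurableEmbedding fun x : ℝ => -x := (Homeomorph.neg ℝ).measurableEmbedding
    rw [← Measure.map_neg_eq_self (volume : Measure ℝ), hneg.integrableOn_map_iff]
    simp_rw [Function.comp_def, abs_neg, neg_preimage, neg_Iic, neg_zero]
    exact (integrableOn_Ici_iff_integrableOn_Ioi).2 hIoi
  rw [← integrableOn_univ, ← Iic_union_Ioi (a := (0 : ℝ))]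
  exact hIic.union hIoi

lemma abs_rpow_div_eq_abs_div_rpow {p q σ : ℝ} (x : ℝ) (hp : p ≠ 0) (hq : 0 ≤ q) (hσ : 0 ≤ σ) :
    |x| ^ p / (q * σ ^ p) = |x / (σ * q ^ (1 / p))| ^ p := by
  rw [abs_div, abs_of_nonneg (mul_nonneg hσ (rpow_nonneg hq _)),
    div_rpow (abs_nonneg x) (by positivity), mul_rpow hσ (by positivity), one_div,
    rpow_inv_rpow hq hp, mul_comm q]

/-- The normalization integral of the generalized t density is finite and equals
(2σq^(1/p)/p)·B(1/p, q). -/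
theorem GT_normalization (p q σ : ℝ) (hp : 0 < p) (hq : 0 < q) (hσ : 0 < σ) :
    Integrable (fun x : ℝ => (1 + |x| ^ p / (q * σ ^ p)) ^ (-(q + 1/p))) ∧
    (∫ x : ℝ, (1 + |x| ^ p / (q * σ ^ p)) ^ (-(q + 1/p)))
      = (2 * σ * q ^ (1/p) / p) * Beta (1/p) q := by
  have hs : 0 < σ * q ^ (1 / p) := by positivity
  simp_rw [abs_rpow_div_eq_abs_div_rpow _ hp.ne' hq.le hσ.le]
  refine ⟨(integrableOn_one_add_rpow_rpow_neg hp hq).comp_abs.comp_div hs.ne', ?_⟩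
  rw [Measure.integral_comp_div (fun y => (1 + |y| ^ p) ^ (-(q + 1 / p))),
    integral_comp_abs (f := fun u => (1 + u ^ p) ^ (-(q + 1 / p))),
    integral_one_add_rpow_rpow_neg hp hq, abs_of_pos hs, smul_eq_mul]
  field_simp
end
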